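/- arXiv:0801.4851 — 3 statements merged into one kernel-verified Lean document; each statement's English description precedes it below -/
import Mathlib

section
/- In any max game on a graph with n ≥ 2 vertices, for every Nash-routing p and every routing p*, the social cost satisfies SC(p) ≤ (2L + 2⌈log₂ n⌉ + 2)·SC(p*). In particular, the price of anarchy of max games is O(L + log n). -/
open Finset

/-- A routing game: a finite set of players `Fin N`, a graph `G` on the finite
vertex type `V`, and for each player a nonempty finite strategy set of paths
(trails of length at least 1) joining its source to its destination. -/
structure RoutingGame (V : Type) [Fintype V] [DecidableEq V] where
  /-- the underlying graph -/
  G : SimpleGraph V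
  /-- the number of players -/
  N : ℕ
  Npos : 0 < N
  /-- the source of each player -/
  src : Fin N → V
  /-- the destination of each player -/
  dst : Fin N → V
  src_ne_dst : ∀ i, src i ≠ dst i
  /-- the strategy set of each player -/
  strat : ∀ i : Fin N, Finset (G.Walk (src i) (dst i))
  strat_nonempty : ∀ i, (strat i).Nonempty
  strat_trail : ∀ i, ∀ q ∈ strat i, q.IsTrail
  strat_len : ∀ i, ∀ q ∈ strat i, 1 ≤ q.length

namespace RoutingGame

variable {V : Type} [Fintype V] [DecidableEq V] (R : RoutingGame V)

/-- A routing assigns to each player a walk from its source to its destination. -/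
abbrev Routing := ∀ i : Fin R.N, R.G.Walk (R.src i) (R.dst i)

/-- `p` is a valid routing if every player's path belongs to its strategy set. -/
def IsRouting (p : R.Routing) : Prop := ∀ i, p i ∈ R.strat i

/-- The edge congestion `C_e(p)`: the number of players whose path uses `e`. -/
def edgeCong (p : R.Routing) (e : Sym2 V) : ℕ :=
  (Finset.univ.filter fun i => e ∈ (p i).edges).card

/-- The path congestion `C_i(p)` of player `i`. -/
def pathCong (p : R.Routing) (i : Fin R.N) : ℕ :=
  (p i).edges.toFinset.sup (R.edgeCong p)

/-- The network congestion `C(p)`. -/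
def netCong (p : R.Routing) : ℕ :=
  Finset.univ.sup (R.edgeCong p)

/-- The maximum path length `D(p)`. -/
def maxLen (p : R.Routing) : ℕ :=
  Finset.univ.sup fun i => (p i).length

/-- The longest path length `L` over all strategy sets. -/
def Lmax : ℕ :=
  Finset.univ.sup fun i : Fin R.N => (R.strat i).sup fun q => q.length

/-- Player cost in the max game: `pc_i(p) = max (C_i(p)) (D_i(p))`. -/
def pcMax (p : R.Routing) (i : Fin R.N) : ℕ :=
  max (R.pathCong p i) (p i).length

/-- Social cost in the max game: `SC(p) = max (C(p)) (D(p))`. -/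
def SCMax (p : R.Routing) : ℕ := max (R.netCong p) (R.maxLen p)

/-- A Nash-routing of the max game: a routing in which every player is locally
optimal. -/
def NashMax (p : R.Routing) : Prop :=
  R.IsRouting p ∧
    ∀ i, ∀ q ∈ R.strat i, R.pcMax p i ≤ R.pcMax (Function.update p i q) i

/-- A greedy move in the max game takes `p` to `p'` by letting a single player
switch to a strictly cheaper path in its strategy set. -/
def GreedyMoveMax (p p' : R.Routing) : Prop :=
  ∃ i, ∃ q ∈ R.strat i,
    p' = Function.update p i q ∧ R.pcMax p' i < R.pcMax p i

/-- The entry `m_k(p)` of the routing vector of the max game: the number of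
players with path congestion `k` plus the number of players with path length `k`. -/
def mvecMax (p : R.Routing) (k : ℕ) : ℕ :=
  (Finset.univ.filter fun i => R.pathCong p i = k).card +
    (Finset.univ.filter fun i => (p i).length = k).card

/-- The strict order on routing vectors (max game): `M(p') < M(p)` iff the
vectors agree above some index `j` and the entry of `p'` at `j` is smaller. -/
def MLtMax (p' p : R.Routing) : Prop :=
  ∃ j : ℕ, (∀ k, j < k → R.mvecMax p' k = R.mvecMax p k) ∧
    R.mvecMax p' j < R.mvecMax p j

/-!
Let `C* = SC(p*)` and let `F_t` be the set of edges of congestion at least `t` in the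
Nash-routing `p`. A player whose path congestion exceeds `t > C*` gains nothing by switching to
its path in `p*`, which is short, so that path must already contain an edge of `F_t`; as each
edge lies on at most `C*` paths of `p*`, at most `C* |F_t|` players have path congestion above
`t`. Each of them meets at most `L` edges, while each edge of `F_{t+1}` carries `t + 1` players,
so `(t + 1) |F_{t+1}| ≤ L C* |F_t|`. Above `2 L C*` the sets `F_t` therefore halve at each step,
and since `|F_t| ≤ n² ≤ 2^(2⌈log₂ n⌉)` the congestion exceeds `2 L C*` by at most `2⌈log₂ n⌉`.
-/

theorem _root_.Nat.two_pow_le_of_two_mul_succ_le {f : ℕ → ℕ} {a : ℕ}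
    (h : ∀ t, a ≤ t → 2 * f (t + 1) ≤ f t) (k : ℕ) (hk : 0 < f (a + k)) : 2 ^ k ≤ f a := by
  induction k generalizing a with
  | zero => exact hk
  | succ k ih =>
    have hk' : 2 ^ k ≤ f (a + 1) :=
      ih (fun t ht => h t (by omega)) (by rwa [Nat.add_right_comm])
    calc 2 ^ (k + 1) = 2 * 2 ^ k := by ring
      _ ≤ 2 * f (a + 1) := by omega
      _ ≤ f a := h a le_rfl

theorem _root_.Fintype.card_sym2_le_sq (α : Type*) [Fintype α] [DecidableEq α] :
    Fintype.card (Sym2 α) ≤ Fintype.card α ^ 2 := by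
  simpa [sq] using Fintype.card_le_of_surjective _ (Sym2.mk_surjective (α := α))

def congestedEdges (p : R.Routing) (t : ℕ) : Finset (Sym2 V) :=
  {e | t ≤ R.edgeCong p e}

def congestedPlayers (p : R.Routing) (t : ℕ) : Finset (Fin R.N) :=
  {i | t ≤ R.pathCong p i}

lemma edgeCong_update_le (p : R.Routing) (i : Fin R.N) (q : R.G.Walk (R.src i) (R.dst i))
    (e : Sym2 V) : R.edgeCong (Function.update p i q) e ≤ R.edgeCong p e + 1 := by
  have hsub : ({j | e ∈ (Function.update p i q j).edges} : Finset (Fin R.N)) ⊆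
      insert i ({j | e ∈ (p j).edges} : Finset (Fin R.N)) := by
    intro j hj
    rcases eq_or_ne j i with rfl | hji
    · exact mem_insert_self _ _
    · simp_all
  exact (card_le_card hsub).trans (card_insert_le _ _)

lemma edgeCong_le_pathCong {p : R.Routing} {i : Fin R.N} {e : Sym2 V} (he : e ∈ (p i).edges) :
    R.edgeCong p e ≤ R.pathCong p i :=
  le_sup (List.mem_toFinset.mpr he)

lemma edgeCong_le_SCMax (p : R.Routing) (e : Sym2 V) : R.edgeCong p e ≤ R.SCMax p :=
  (le_sup (mem_univ e)).trans (le_max_left _ _)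

lemma length_le_SCMax (p : R.Routing) (i : Fin R.N) : (p i).length ≤ R.SCMax p :=
  (le_sup (f := fun j => (p j).length) (mem_univ i)).trans (le_max_right _ _)

lemma length_le_Lmax {p : R.Routing} (hp : R.IsRouting p) (i : Fin R.N) :
    (p i).length ≤ R.Lmax :=
  (le_sup (f := fun q => q.length) (hp i)).trans
    (le_sup (f := fun j => (R.strat j).sup fun q => q.length) (mem_univ i))

lemma maxLen_le_Lmax {p : R.Routing} (hp : R.IsRouting p) : R.maxLen p ≤ R.Lmax :=
  Finset.sup_le fun i _ => R.length_le_Lmax hp i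

lemma one_le_Lmax : 1 ≤ R.Lmax := by
  let i : Fin R.N := ⟨0, R.Npos⟩
  obtain ⟨q, hq⟩ := R.strat_nonempty i
  exact (R.strat_len i q hq).trans
    ((le_sup (f := fun q => q.length) hq).trans
      (le_sup (f := fun j => (R.strat j).sup fun q => q.length) (mem_univ i)))

lemma one_le_SCMax {p : R.Routing} (hp : R.IsRouting p) : 1 ≤ R.SCMax p :=
  let i : Fin R.N := ⟨0, R.Npos⟩
  (R.strat_len i _ (hp i)).trans (R.length_le_SCMax p i)

variable {R} in
lemma NashMax.exists_mem_edges_le_edgeCong {p pstar : R.Routing} (hp : R.NashMax p)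
    (hstar : R.IsRouting pstar) {t : ℕ} (ht : R.SCMax pstar < t + 1) {i : Fin R.N}
    (hi : t + 1 ≤ R.pathCong p i) : ∃ e ∈ (pstar i).edges, t ≤ R.edgeCong p e := by
  have hcost : t + 1 ≤ R.pcMax (Function.update p i (pstar i)) i :=
    (hi.trans (le_max_left _ _)).trans (hp.2 i _ (hstar i))
  have hcong : t + 1 ≤ R.pathCong (Function.update p i (pstar i)) i := by
    have := R.length_le_SCMax pstar i
    rw [pcMax, Function.update_self, le_max_iff] at hcost
    omega
  rw [pathCong, Finset.le_sup_iff (Nat.succ_pos t)] at hcong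
  obtain ⟨e, he, hte⟩ := hcong
  rw [Function.update_self, List.mem_toFinset] at he
  exact ⟨e, he, by have := R.edgeCong_update_le p i (pstar i) e; omega⟩

lemma card_congestedPlayers_le {p pstar : R.Routing} (hp : R.NashMax p)
    (hstar : R.IsRouting pstar) {t : ℕ} (ht : R.SCMax pstar < t + 1) :
    #(R.congestedPlayers p (t + 1)) ≤ R.SCMax pstar * #(R.congestedEdges p t) := by
  suffices #(R.congestedPlayers p (t + 1)) * 1 ≤ #(R.congestedEdges p t) * R.SCMax pstar by
    simpa [mul_comm] using this
  refine card_mul_le_card_mul (fun i e => e ∈ (pstar i).edges) (fun i hi => ?_) (fun e _ => ?_)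
  · obtain ⟨e, he, hte⟩ :=
      hp.exists_mem_edges_le_edgeCong hstar ht (by simpa [congestedPlayers] using hi)
    exact card_pos.mpr ⟨e, mem_filter.mpr ⟨by simpa [congestedEdges] using hte, he⟩⟩
  · exact (card_le_card (filter_subset_filter _ (subset_univ _))).trans
      (R.edgeCong_le_SCMax pstar e)

lemma card_congestedEdges_mul_le {p : R.Routing} (hp : R.IsRouting p) (t : ℕ) :
    #(R.congestedEdges p t) * t ≤ #(R.congestedPlayers p t) * R.Lmax := by
  refine card_mul_le_card_mul (fun e i => e ∈ (p i).edges) (fun e he => ?_) (fun i _ => ?_)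
  · have hte : t ≤ R.edgeCong p e := by simpa [congestedEdges] using he
    refine hte.trans (card_le_card fun i hi => ?_)
    replace hi : e ∈ (p i).edges := by simpa using hi
    exact mem_filter.mpr
      ⟨by simpa [congestedPlayers] using hte.trans (R.edgeCong_le_pathCong hi), hi⟩
  · calc #((R.congestedEdges p t).bipartiteBelow (fun e i => e ∈ (p i).edges) i)
        ≤ #(p i).edges.toFinset :=
          card_le_card fun e he => List.mem_toFinset.mpr (mem_filter.mp he).2
      _ ≤ (p i).edges.length := List.toFinset_card_le _
      _ = (p i).length := (p i).length_edges
      _ ≤ R.Lmax := R.length_le_Lmax hp i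

lemma two_mul_card_congestedEdges_succ_le {p pstar : R.Routing} (hp : R.NashMax p)
    (hstar : R.IsRouting pstar) {t : ℕ} (ht : 2 * R.Lmax * R.SCMax pstar ≤ t) :
    2 * #(R.congestedEdges p (t + 1)) ≤ #(R.congestedEdges p t) := by
  set m := R.Lmax * R.SCMax pstar
  have h2m : 2 * m = 2 * R.Lmax * R.SCMax pstar := (mul_assoc _ _ _).symm
  have hm : 1 ≤ m := Nat.one_le_iff_ne_zero.mpr
    (Nat.mul_ne_zero (by have := R.one_le_Lmax; omega) (by have := R.one_le_SCMax hstar; omega))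
  have hCs : R.SCMax pstar ≤ m := Nat.le_mul_of_pos_left _ (by have := R.one_le_Lmax; omega)
  have hcount : #(R.congestedEdges p (t + 1)) * (t + 1) ≤ m * #(R.congestedEdges p t) :=
    calc #(R.congestedEdges p (t + 1)) * (t + 1)
        ≤ #(R.congestedPlayers p (t + 1)) * R.Lmax := R.card_congestedEdges_mul_le hp.1 _
      _ ≤ R.SCMax pstar * #(R.congestedEdges p t) * R.Lmax :=
          Nat.mul_le_mul_right _ (R.card_congestedPlayers_le hp hstar (by omega))
      _ = m * #(R.congestedEdges p t) := by ring
  refine Nat.le_of_mul_le_mul_left ?_ hm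
  calc m * (2 * #(R.congestedEdges p (t + 1))) = #(R.congestedEdges p (t + 1)) * (2 * m) := by
        ring
    _ ≤ #(R.congestedEdges p (t + 1)) * (t + 1) := Nat.mul_le_mul_left _ (by omega)
    _ ≤ m * #(R.congestedEdges p t) := hcount

lemma netCong_le {p pstar : R.Routing} (hp : R.NashMax p) (hstar : R.IsRouting pstar) :
    R.netCong p ≤ 2 * R.Lmax * R.SCMax pstar + 2 * Nat.clog 2 (Fintype.card V) := by
  set a := 2 * R.Lmax * R.SCMax pstar
  set c := Nat.clog 2 (Fintype.card V)
  obtain hle | hlt := le_or_gt (R.netCong p) a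
  · omega
  obtain ⟨k, hk⟩ := Nat.exists_eq_add_of_lt hlt
  obtain ⟨e, -, he⟩ := (Finset.le_sup_iff (Nat.succ_pos _)).mp hk.ge
  have hpow : 2 ^ (k + 1) ≤ 2 ^ (2 * c) :=
    calc 2 ^ (k + 1) ≤ #(R.congestedEdges p a) :=
          Nat.two_pow_le_of_two_mul_succ_le (f := fun t => #(R.congestedEdges p t))
            (fun t ht => R.two_mul_card_congestedEdges_succ_le hp hstar ht) (k + 1)
            (card_pos.mpr ⟨e, by simpa [congestedEdges, ← add_assoc] using he⟩)
      _ ≤ Fintype.card (Sym2 V) := card_le_univ _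
      _ ≤ Fintype.card V ^ 2 := Fintype.card_sym2_le_sq V
      _ ≤ (2 ^ c) ^ 2 := Nat.pow_le_pow_left (Nat.le_pow_clog one_lt_two _) 2
      _ = 2 ^ (2 * c) := by ring
  have := (Nat.pow_le_pow_iff_right (by norm_num : 1 < 2)).mp hpow
  omega

theorem max_price_of_anarchy_general (R : RoutingGame V) (p pstar : R.Routing)
    (hp : R.NashMax p) (hstar : R.IsRouting pstar) :
    R.SCMax p ≤
      (2 * R.Lmax + 2 * Nat.clog 2 (Fintype.card V) + 2) * R.SCMax pstar := by
  have hCs := R.one_le_SCMax hstar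
  have hC := R.netCong_le hp hstar
  have hD := R.maxLen_le_Lmax hp.1
  refine max_le ?_ ?_ <;> nlinarith

/-- In any max game on a graph with `n ≥ 2` vertices, for every
Nash-routing `p` and every routing `p*`, the social cost satisfies
`SC(p) ≤ (2L + 2⌈log₂ n⌉ + 2)·SC(p*)`.  In particular, the price of anarchy of
max games is `O(L + log n)`. -/
theorem max_price_of_anarchy (R : RoutingGame V) (p pstar : R.Routing)
    (hp : R.NashMax p) (hstar : R.IsRouting pstar)
    (hn : 2 ≤ Fintype.card V) :
    R.SCMax p ≤
      (2 * R.Lmax + 2 * Nat.clog 2 (Fintype.card V) + 2) * R.SCMax pstar :=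
  max_price_of_anarchy_general R p pstar hp hstar

end RoutingGame
end

section
/- In any sum-bucket game, every sequence of routings in which each routing is obtained from the previous one by a greedy move of a single player is finite; consequently, every sum-bucket game possesses at least one Nash-routing, and best-response dynamics from any initial routing reach a Nash-routing in finitely many steps. -/
/-! The potential `Φ(p) = ∑ᵢ (N + 1) ^ pcᵢ(p)` strictly decreases under every greedy move.
When player `i` lowers its cost from `c` to `c' < c`, another player `j` can only gain
congestion on edges of `i`'s new path, and only if that path lies in `j`'s bucket; then `j`
has the same normalized length as `i`, so `j`'s new cost is at most `c'`. Each other player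
thus raises its term by at most `(N + 1) ^ c'`, and together with `i`'s new term this is at
most `N (N + 1) ^ c' < (N + 1) ^ c`, the term that `i` gives up. A potential in `ℕ` rules out
infinite greedy sequences, so making greedy moves while one exists stops, at a Nash-routing. -/

open Finset

namespace RoutingGame

variable {V : Type} [Fintype V] [DecidableEq V] (R : RoutingGame V)

/-- Player cost in the sum game: `pc_i(p) = C_i(p) + D_i(p)`. -/
def pcSum (p : R.Routing) (i : Fin R.N) : ℕ :=
  R.pathCong p i + (p i).length

/-- For a bucket index `b`, the number of players whose path uses edge `e`
and belongs to bucket `b` (the bucket of a path `q` is `⌊log₂ |q|⌋`). -/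
def nCongB (p : R.Routing) (b : ℕ) (e : Sym2 V) : ℕ :=
  (Finset.univ.filter fun j => e ∈ (p j).edges ∧ Nat.log 2 (p j).length = b).card

/-- The normalized congestion `C̄_i(p)` of player `i`: the maximum, over the
edges of `p_i`, of the congestion caused by paths in the bucket of `p_i`. -/
def nCong (p : R.Routing) (i : Fin R.N) : ℕ :=
  (p i).edges.toFinset.sup (R.nCongB p (Nat.log 2 (p i).length))

/-- The normalized length `D̄_i(p) = 2 ^ (B(p_i) + 1) - 1` of player `i`. -/
def nLen (p : R.Routing) (i : Fin R.N) : ℕ :=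
  2 ^ (Nat.log 2 (p i).length + 1) - 1

/-- Player cost in the sum-bucket game: `pc_i(p) = C̄_i(p) + D̄_i(p)`. -/
def pcSB (p : R.Routing) (i : Fin R.N) : ℕ := R.nCong p i + R.nLen p i

/-- The normalized congestion `C̄(p)` of a routing. -/
def nC (p : R.Routing) : ℕ := Finset.univ.sup (R.nCong p)

/-- The normalized length `D̄(p)` of a routing. -/
def nD (p : R.Routing) : ℕ := Finset.univ.sup (R.nLen p)

/-- The normalized edge congestion `C̄_e(p) = max_i C̄_{e,p_i}(p)`. -/
def nCe (p : R.Routing) (e : Sym2 V) : ℕ :=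
  Finset.univ.sup fun i => R.nCongB p (Nat.log 2 (p i).length) e

/-- Social cost in the sum-bucket game: `SC(p) = C̄(p) + D̄(p)`. -/
def SCSB (p : R.Routing) : ℕ := R.nC p + R.nD p

/-- A Nash-routing of the sum-bucket game: a routing in which every player is
locally optimal. -/
def NashSB (p : R.Routing) : Prop :=
  R.IsRouting p ∧
    ∀ i, ∀ q ∈ R.strat i, R.pcSB p i ≤ R.pcSB (Function.update p i q) i

/-- A greedy move in the sum-bucket game takes `p` to `p'` by letting a single
player switch to a strictly cheaper path in its strategy set. -/
def GreedyMoveSB (p p' : R.Routing) : Prop :=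
  ∃ i, ∃ q ∈ R.strat i,
    p' = Function.update p i q ∧ R.pcSB p' i < R.pcSB p i

/-- The entry `m_j(p)` of the routing vector of the sum-bucket game: the number
of players whose cost equals `j`. -/
def mvecSB (p : R.Routing) (j : ℕ) : ℕ :=
  (Finset.univ.filter fun i => R.pcSB p i = j).card

/-- The strict order on routing vectors (sum-bucket game): `M(p') < M(p)` iff
the vectors agree above some index `j` and the entry of `p'` at `j` is smaller. -/
def MLtSB (p' p : R.Routing) : Prop :=
  ∃ j : ℕ, (∀ k, j < k → R.mvecSB p' k = R.mvecSB p k) ∧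
    R.mvecSB p' j < R.mvecSB p j

theorem _root_.sum_pow_lt_sum_pow_of_le_max {ι : Type*} [Fintype ι] [DecidableEq ι] {b : ℕ}
    (hb : Fintype.card ι < b) {c c' : ι → ℕ} {i : ι} (hi : c' i < c i)
    (hle : ∀ j ≠ i, c' j ≤ max (c j) (c' i)) :
    ∑ j, b ^ c' j < ∑ j, b ^ c j := by
  have hb1 : 1 ≤ b := by omega
  have hterm : ∀ j, b ^ c' j + (if i = j then b ^ c i else 0) ≤ b ^ c j + b ^ c' i := by
    intro j
    by_cases hji : i = j
    · subst hji; simp [add_comm]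
    · rw [if_neg hji, add_zero]
      rcases le_max_iff.1 (hle j (Ne.symm hji)) with h | h
      · exact le_add_right (pow_le_pow_right₀ hb1 h)
      · exact le_add_left (pow_le_pow_right₀ hb1 h)
  have hrest : Fintype.card ι * b ^ c' i < b ^ c i :=
    calc Fintype.card ι * b ^ c' i < b * b ^ c' i :=
          Nat.mul_lt_mul_of_pos_right hb (by positivity)
      _ = b ^ (c' i + 1) := by ring
      _ ≤ b ^ c i := pow_le_pow_right₀ hb1 hi
  have hsum := Finset.sum_le_sum fun j (_ : j ∈ Finset.univ) => hterm j
  simp only [Finset.sum_add_distrib, Finset.sum_ite_eq, Finset.mem_univ, if_true,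
    Finset.sum_const, Finset.card_univ, smul_eq_mul] at hsum
  omega

theorem _root_.WellFounded.exists_chain_of_forall_exists_rel {α : Type*} {r : α → α → Prop}
    (hwf : WellFounded (flip r)) {S : Set α} {P : α → Prop}
    (hstep : ∀ a ∈ S, ¬ P a → ∃ b ∈ S, r a b) :
    ∀ a ∈ S, ∃ (T : ℕ) (f : ℕ → α),
      f 0 = a ∧ (∀ t < T, r (f t) (f (t + 1))) ∧ P (f T) := by
  intro a
  induction a using hwf.induction with
  | _ a ih =>
  intro ha
  by_cases hPa : P a
  · exact ⟨0, fun _ => a, rfl, by simp, hPa⟩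
  obtain ⟨b, hbS, hab⟩ := hstep a ha hPa
  obtain ⟨T, f, rfl, hf, hPT⟩ := ih _ hab hbS
  refine ⟨T + 1, fun | 0 => a | t + 1 => f t, rfl, ?_, hPT⟩
  rintro (_ | t) ht
  · exact hab
  · exact hf t (by omega)

def potential (p : R.Routing) : ℕ := ∑ i, (R.N + 1) ^ R.pcSB p i

section Update

variable {R} (p : R.Routing) {i j : Fin R.N} (q : R.G.Walk (R.src i) (R.dst i))

theorem nCongB_update_le {b : ℕ} {e : Sym2 V}
    (h : ¬ (e ∈ q.edges ∧ Nat.log 2 q.length = b)) :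
    R.nCongB (Function.update p i q) b e ≤ R.nCongB p b e := by
  refine Finset.card_le_card fun k hk => ?_
  simp only [Finset.mem_filter, Finset.mem_univ, true_and] at hk ⊢
  rcases eq_or_ne k i with rfl | hki
  · rw [Function.update_self] at hk
    exact absurd hk h
  · rwa [Function.update_of_ne hki] at hk

theorem nLen_update_of_ne (hji : j ≠ i) : R.nLen (Function.update p i q) j = R.nLen p j := by
  simp only [nLen, Function.update_of_ne hji]

theorem nCong_update_le_of_bucket_ne (hji : j ≠ i)
    (hb : Nat.log 2 q.length ≠ Nat.log 2 (p j).length) :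
    R.nCong (Function.update p i q) j ≤ R.nCong p j := by
  simp only [nCong, Function.update_of_ne hji]
  exact Finset.sup_le fun e he =>
    (nCongB_update_le p q fun h => hb h.2).trans (Finset.le_sup he)

theorem nCong_update_le_max (hji : j ≠ i) :
    R.nCong (Function.update p i q) j ≤
      max (R.nCong p j) (R.nCong (Function.update p i q) i) := by
  simp only [nCong, Function.update_of_ne hji]
  refine Finset.sup_le fun e he => ?_
  by_cases hcrowd : e ∈ q.edges ∧ Nat.log 2 q.length = Nat.log 2 (p j).length
  · refine le_max_of_le_right ?_
    simp only [Function.update_self, hcrowd.2]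
    exact Finset.le_sup (List.mem_toFinset.2 hcrowd.1)
  · exact le_max_of_le_left ((nCongB_update_le p q hcrowd).trans (Finset.le_sup he))

theorem pcSB_update_le_max (hji : j ≠ i) :
    R.pcSB (Function.update p i q) j ≤
      max (R.pcSB p j) (R.pcSB (Function.update p i q) i) := by
  by_cases hb : Nat.log 2 q.length = Nat.log 2 (p j).length
  · have hlen : R.nLen (Function.update p i q) i = R.nLen p j := by
      simp only [nLen, Function.update_self, hb]
    calc R.pcSB (Function.update p i q) j
        ≤ max (R.nCong p j) (R.nCong (Function.update p i q) i) + R.nLen p j := by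
          rw [pcSB, nLen_update_of_ne p q hji]
          exact Nat.add_le_add_right (nCong_update_le_max p q hji) _
      _ = max (R.pcSB p j) (R.pcSB (Function.update p i q) i) := by
          rw [pcSB, pcSB, hlen, max_add_add_right]
  · refine le_max_of_le_left ?_
    rw [pcSB, pcSB, nLen_update_of_ne p q hji]
    exact Nat.add_le_add_right (nCong_update_le_of_bucket_ne p q hji hb) _

end Update

theorem potential_lt_of_greedyMoveSB {p p' : R.Routing} (h : R.GreedyMoveSB p p') :
    R.potential p' < R.potential p := by
  obtain ⟨i, q, -, rfl, hlt⟩ := h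
  exact sum_pow_lt_sum_pow_of_le_max (by simp) hlt fun j hji => pcSB_update_le_max p q hji

theorem wellFounded_flip_greedyMoveSB : WellFounded (flip R.GreedyMoveSB) :=
  Subrelation.wf (fun h => R.potential_lt_of_greedyMoveSB h)
    (InvImage.wf R.potential wellFounded_lt)

variable {R} in
theorem IsRouting.update {p : R.Routing} (hp : R.IsRouting p) {i : Fin R.N}
    {q : R.G.Walk (R.src i) (R.dst i)} (hq : q ∈ R.strat i) :
    R.IsRouting (Function.update p i q) := by
  intro j
  rcases eq_or_ne j i with rfl | hji
  · rwa [Function.update_self]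
  · rw [Function.update_of_ne hji]
    exact hp j

theorem exists_greedyMoveSB_of_not_nashSB {p : R.Routing} (hp : R.IsRouting p)
    (hnash : ¬ R.NashSB p) : ∃ p', R.IsRouting p' ∧ R.GreedyMoveSB p p' := by
  obtain ⟨i, q, hq, hlt⟩ : ∃ i, ∃ q ∈ R.strat i,
      R.pcSB (Function.update p i q) i < R.pcSB p i := by
    simpa [NashSB, hp] using hnash
  exact ⟨_, hp.update hq, i, q, hq, rfl, hlt⟩

theorem exists_isRouting : ∃ p : R.Routing, R.IsRouting p :=
  ⟨fun i => (R.strat_nonempty i).choose, fun i => (R.strat_nonempty i).choose_spec⟩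

/-- In any sum-bucket game, every sequence of routings in which
each routing is obtained from the previous one by a greedy move of a single
player is finite; consequently, every sum-bucket game possesses at least one
Nash-routing, and best-response dynamics from any initial routing reach a
Nash-routing in finitely many steps. -/
theorem sum_bucket_game_converges (R : RoutingGame V) :
    (¬ ∃ f : ℕ → R.Routing, R.IsRouting (f 0) ∧
        ∀ t, R.GreedyMoveSB (f t) (f (t + 1))) ∧
    (∃ p : R.Routing, R.NashSB p) ∧
    (∀ p₀ : R.Routing, R.IsRouting p₀ →
      ∃ (T : ℕ) (f : ℕ → R.Routing), f 0 = p₀ ∧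
        (∀ t < T, R.GreedyMoveSB (f t) (f (t + 1))) ∧ R.NashSB (f T)) := by
  have hreach := R.wellFounded_flip_greedyMoveSB.exists_chain_of_forall_exists_rel
    (S := {p | R.IsRouting p}) fun p hp hnash => R.exists_greedyMoveSB_of_not_nashSB hp hnash
  refine ⟨?_, ?_, hreach⟩
  · rintro ⟨f, -, hf⟩
    exact (wellFounded_iff_isEmpty_descending_chain.1 R.wellFounded_flip_greedyMoveSB).elim
      ⟨f, hf⟩
  · obtain ⟨p₀, hp₀⟩ := R.exists_isRouting
    obtain ⟨T, f, -, -, hnash⟩ := hreach p₀ hp₀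
    exact ⟨f T, hnash⟩

end RoutingGame
end

section
/- Let p be a Nash-routing of a sum-bucket game on a graph with n ≥ 2 vertices, and let p* be any routing with C̄* = C̄(p*) and D̄* = D̄(p*). Then C̄(p) ≤ 18 · C̄* · D̄* · ⌈log₂ n⌉². -/
open Finset

namespace RoutingGame

variable {V : Type} [Fintype V] [DecidableEq V] (R : RoutingGame V)

/-!
A Nash player pays at most what it would pay on its `p*`-path, so a player of cost at least `M`
points to an edge `e` of its `p*`-path such that, for the bucket `b` of that path, the bucket-`b`
congestion of `e` in `p` plus `2 ^ (b + 1)` is at least `M`. At most `C̄*` players point to the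
same edge within the same bucket, and `p*`-paths are trails, hence lie in at most `2⌈log₂ n⌉ + 1`
buckets: `k` players of cost `≥ M` yield `k / (C̄* (2⌈log₂ n⌉ + 1))` such edges in one bucket `b`
with `2 ^ (b + 1) ≤ D̄* + 1`. Conversely, by double counting, `k` edges of bucket-`b` congestion
`≥ K` carry at least `k K / D̄*` players of bucket `b`, each of cost `≥ K + 2 ^ (b + 1) - 1`.
Start from the `C̄(p)` players on a most congested edge and alternate the two steps: as long as
`C̄(p) > 18 C̄* D̄* ⌈log₂ n⌉²`, the edge set doubles in every round while the cost threshold drops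
by one, so after `2⌈log₂ n⌉ + 1` rounds it would outnumber the `n²` possible edges.
-/

theorem _root_.Finset.exists_card_le_mul_card_fiber_of_maps_to {α β : Type*} [DecidableEq β]
    {s : Finset α} {t : Finset β} {f : α → β} (hf : ∀ a ∈ s, f a ∈ t) (ht : t.Nonempty) :
    ∃ y ∈ t, #s ≤ #t * #{x ∈ s | f x = y} :=
  exists_le_of_sum_le ht <| by
    rw [sum_const, smul_eq_mul, ← mul_sum, ← card_eq_sum_card_fiberwise hf, mul_comm]

theorem _root_.Sym2.card_le_sq (α : Type*) [Fintype α] :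
    Fintype.card (Sym2 α) ≤ Fintype.card α ^ 2 := by
  rw [Sym2.card, Nat.choose_two_right, Nat.add_sub_cancel]
  exact Nat.div_le_of_le_mul (by nlinarith)

theorem _root_.Sym2.card_le_two_pow_two_mul_clog (α : Type*) [Fintype α] :
    Fintype.card (Sym2 α) ≤ 2 ^ (2 * Nat.clog 2 (Fintype.card α)) :=
  calc Fintype.card (Sym2 α) ≤ Fintype.card α ^ 2 := Sym2.card_le_sq α
    _ ≤ (2 ^ Nat.clog 2 (Fintype.card α)) ^ 2 :=
      Nat.pow_le_pow_left (Nat.le_pow_clog one_lt_two _) 2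
    _ = 2 ^ (2 * Nat.clog 2 (Fintype.card α)) := by rw [← pow_mul, mul_comm]

theorem _root_.SimpleGraph.Walk.IsTrail.length_le_card_sym2 {α : Type*} [Fintype α]
    [DecidableEq α] {G : SimpleGraph α} {u v : α} {w : G.Walk u v} (h : w.IsTrail) :
    w.length ≤ Fintype.card (Sym2 α) := by
  rw [← w.length_edges, ← List.toFinset_card_of_nodup h.edges_nodup]
  exact card_le_univ _

theorem _root_.SimpleGraph.Walk.edges_toFinset_nonempty {α : Type*} [DecidableEq α]
    {G : SimpleGraph α} {u v : α} {w : G.Walk u v} (h : 1 ≤ w.length) :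
    w.edges.toFinset.Nonempty := by
  rw [List.toFinset_nonempty_iff, ← List.length_pos_iff, w.length_edges]
  exact h

theorem two_le_card (R : RoutingGame V) : 2 ≤ Fintype.card V :=
  Fintype.one_lt_card_iff.mpr ⟨_, _, R.src_ne_dst ⟨0, R.Npos⟩⟩

theorem log_length_lt_of_mem_strat {i : Fin R.N} {q : R.G.Walk (R.src i) (R.dst i)}
    (hq : q ∈ R.strat i) : Nat.log 2 q.length < 2 * Nat.clog 2 (Fintype.card V) + 1 :=
  Nat.log_lt_of_lt_pow (Nat.one_le_iff_ne_zero.mp (R.strat_len i q hq)) <|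
    ((R.strat_trail i q hq).length_le_card_sym2.trans
      (Sym2.card_le_two_pow_two_mul_clog V)).trans_lt (Nat.pow_lt_pow_succ one_lt_two)

theorem nLen_add_one (p : R.Routing) (i : Fin R.N) :
    R.nLen p i + 1 = 2 ^ (Nat.log 2 (p i).length + 1) :=
  Nat.sub_add_cancel Nat.one_le_two_pow

theorem one_le_nLen (p : R.Routing) (i : Fin R.N) : 1 ≤ R.nLen p i :=
  Nat.le_sub_of_add_le (Nat.le_self_pow (Nat.succ_ne_zero _) 2)

theorem one_le_nD (p : R.Routing) : 1 ≤ R.nD p :=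
  (R.one_le_nLen p ⟨0, R.Npos⟩).trans (le_sup (mem_univ _))

section

variable {R} {p : R.Routing}

theorem nCongB_le_nCong {j : Fin R.N} {e : Sym2 V} (he : e ∈ (p j).edges) :
    R.nCongB p (Nat.log 2 (p j).length) e ≤ R.nCong p j :=
  le_sup (List.mem_toFinset.mpr he)

theorem nCongB_le_nC {j : Fin R.N} {e : Sym2 V} (he : e ∈ (p j).edges) :
    R.nCongB p (Nat.log 2 (p j).length) e ≤ R.nC p :=
  (nCongB_le_nCong he).trans (le_sup (mem_univ j))

theorem one_le_nC (hp : R.IsRouting p) : 1 ≤ R.nC p := by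
  obtain ⟨e, he⟩ := (p ⟨0, R.Npos⟩).edges_toFinset_nonempty (R.strat_len _ _ (hp _))
  have he := List.mem_toFinset.mp he
  have hpos : 0 < R.nCongB p (Nat.log 2 (p ⟨0, R.Npos⟩).length) e :=
    card_pos.mpr ⟨_, mem_filter.mpr ⟨mem_univ _, he, rfl⟩⟩
  exact hpos.trans_le (nCongB_le_nC he)

theorem exists_nCongB_eq_nC (hp : R.IsRouting p) :
    ∃ j, ∃ e ∈ (p j).edges, R.nCongB p (Nat.log 2 (p j).length) e = R.nC p := by
  obtain ⟨j, -, hj⟩ := exists_mem_eq_sup univ ⟨⟨0, R.Npos⟩, mem_univ _⟩ (R.nCong p)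
  obtain ⟨e, he, hje⟩ := exists_mem_eq_sup _
    ((p j).edges_toFinset_nonempty (R.strat_len j _ (hp j)))
    (R.nCongB p (Nat.log 2 (p j).length))
  exact ⟨j, e, List.mem_toFinset.mp he, hje.symm.trans hj.symm⟩

/- `nCongB p b e + 2 ^ (b + 1)` bounds the cost of a player who moves onto the edge `e` with a
path of bucket `b`. -/
theorem nCongB_add_two_pow_le_pcSB_add_one {j : Fin R.N} {e : Sym2 V} (he : e ∈ (p j).edges) :
    R.nCongB p (Nat.log 2 (p j).length) e + 2 ^ (Nat.log 2 (p j).length + 1) ≤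
      R.pcSB p j + 1 := by
  have := R.nLen_add_one p j
  have := nCongB_le_nCong he
  unfold pcSB
  omega

theorem nCongB_update_le_s14 (j : Fin R.N) (q : R.G.Walk (R.src j) (R.dst j)) (b : ℕ)
    (e : Sym2 V) : R.nCongB (Function.update p j q) b e ≤ R.nCongB p b e + 1 := by
  refine (card_le_card fun k hk => ?_).trans (card_insert_le j _)
  rcases eq_or_ne k j with rfl | hkj
  · exact mem_insert_self k _
  · rw [mem_filter, Function.update_of_ne hkj] at hk
    exact mem_insert_of_mem (mem_filter.mpr hk)

theorem NashSB.pcSB_le_of_mem_strat (hp : R.NashSB p) {j : Fin R.N}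
    {q : R.G.Walk (R.src j) (R.dst j)} (hq : q ∈ R.strat j) :
    ∃ e ∈ q.edges,
      R.pcSB p j ≤ R.nCongB p (Nat.log 2 q.length) e + 2 ^ (Nat.log 2 q.length + 1) := by
  obtain ⟨e, he, hsup⟩ := exists_mem_eq_sup _ (q.edges_toFinset_nonempty (R.strat_len j q hq))
    (R.nCongB (Function.update p j q) (Nat.log 2 q.length))
  refine ⟨e, List.mem_toFinset.mp he, ?_⟩
  have hcost : R.pcSB (Function.update p j q) j + 1 =
      R.nCongB (Function.update p j q) (Nat.log 2 q.length) e + 2 ^ (Nat.log 2 q.length + 1) := by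
    have := R.nLen_add_one (Function.update p j q) j
    simp only [pcSB, nCong, Function.update_self] at this ⊢
    omega
  have := hp.2 j q hq
  have := nCongB_update_le_s14 (p := p) j q (Nat.log 2 q.length) e
  omega

theorem exists_bucket_edges_of_le_pcSB (hp : R.NashSB p) {pstar : R.Routing}
    (hstar : R.IsRouting pstar) {m : ℕ} (hm : ∀ j, Nat.log 2 (pstar j).length < m)
    (P : Finset (Fin R.N)) (M : ℕ) (hP : ∀ j ∈ P, M ≤ R.pcSB p j) :
    ∃ b E, 2 ^ (b + 1) ≤ R.nD pstar + 1 ∧ (∀ e ∈ E, M ≤ R.nCongB p b e + 2 ^ (b + 1)) ∧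
      #P ≤ R.nC pstar * m * #E := by
  choose F hF hdev using fun j => hp.pcSB_le_of_mem_strat (hstar j)
  obtain ⟨b, -, hb⟩ := exists_card_le_mul_card_fiber_of_maps_to
    (f := fun j => Nat.log 2 (pstar j).length) (s := P) (t := range m)
    (fun j _ => mem_range.mpr (hm j)) ⟨0, mem_range.mpr ((Nat.zero_le _).trans_lt (hm ⟨0, R.Npos⟩))⟩
  rw [card_range] at hb
  set Pb := {j ∈ P | Nat.log 2 (pstar j).length = b}
  rcases Pb.eq_empty_or_nonempty with hPb | ⟨j₀, hj₀⟩
  · refine ⟨0, ∅, by simpa using R.one_le_nD pstar, by simp, ?_⟩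
    rw [hPb, card_empty, mul_zero] at hb
    simpa using hb
  -- players of `Pb` deviating onto the same edge share that edge and the bucket `b` in `pstar`
  have hfiber : ∀ e ∈ Pb.image F, #{j ∈ Pb | F j = e} ≤ R.nC pstar := by
    intro e he
    obtain ⟨j, hj, rfl⟩ := mem_image.mp he
    have hjb : Nat.log 2 (pstar j).length = b := (mem_filter.mp hj).2
    refine (card_le_card fun k hk => ?_).trans (hjb ▸ nCongB_le_nC (hF j))
    obtain ⟨hkP, hkF⟩ := mem_filter.mp hk
    exact mem_filter.mpr ⟨mem_univ k, hkF ▸ hF k, (mem_filter.mp hkP).2⟩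
  refine ⟨b, Pb.image F, ?_, ?_, ?_⟩
  · have := (mem_filter.mp hj₀).2 ▸ R.nLen_add_one pstar j₀
    have : R.nLen pstar j₀ ≤ R.nD pstar := le_sup (mem_univ j₀)
    omega
  · intro e he
    obtain ⟨j, hj, rfl⟩ := mem_image.mp he
    obtain ⟨hjP, hjb⟩ := mem_filter.mp hj
    exact (hP j hjP).trans (hjb ▸ hdev j)
  · calc #P ≤ m * #Pb := hb
      _ ≤ m * (R.nC pstar * #(Pb.image F)) := by gcongr; exact card_le_mul_card_image Pb _ hfiber
      _ = R.nC pstar * m * #(Pb.image F) := by ring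

theorem card_mul_le_card_mul_of_le_nCongB {b K D : ℕ} {E : Finset (Sym2 V)}
    (hK : ∀ e ∈ E, K ≤ R.nCongB p b e)
    (hD : ∀ j, Nat.log 2 (p j).length = b → (p j).length ≤ D) :
    #E * K ≤ #{j | Nat.log 2 (p j).length = b ∧ ∃ e ∈ E, e ∈ (p j).edges} * D := by
  refine card_mul_le_card_mul (fun e j => e ∈ (p j).edges) (fun e he => ?_) (fun j hj => ?_)
  · refine (hK e he).trans (card_le_card fun j hj => ?_)
    obtain ⟨hje, hjb⟩ := (mem_filter.mp hj).2
    exact mem_filter.mpr ⟨mem_filter.mpr ⟨mem_univ j, hjb, e, he, hje⟩, hje⟩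
  · calc #(E.bipartiteBelow (fun e j => e ∈ (p j).edges) j) ≤ #(p j).edges.toFinset :=
          card_le_card fun e he => List.mem_toFinset.mpr (mem_filter.mp he).2
      _ ≤ (p j).length := (p j).length_edges ▸ List.toFinset_card_le _
      _ ≤ D := hD j (mem_filter.mp hj).2.1

theorem exists_bucket_edges_two_le_card (hp : R.NashSB p) {pstar : R.Routing}
    (hstar : R.IsRouting pstar) {m : ℕ} (hm : ∀ j, Nat.log 2 (pstar j).length < m)
    (hC : R.nC pstar * m < R.nC p) :
    ∃ b E, 2 ^ (b + 1) ≤ R.nD pstar + 1 ∧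
      (∀ e ∈ E, R.nC p ≤ R.nCongB p b e + 2 ^ (b + 1)) ∧ 2 ≤ #E := by
  obtain ⟨i, e, -, hi⟩ := exists_nCongB_eq_nC hp.1
  set P : Finset (Fin R.N) :=
    {j | e ∈ (p j).edges ∧ Nat.log 2 (p j).length = Nat.log 2 (p i).length}
  have hP : #P = R.nC p := hi
  have hcost : ∀ j ∈ P, R.nC p ≤ R.pcSB p j := by
    intro j hj
    obtain ⟨hje, hjb⟩ := (mem_filter.mp hj).2
    have hcong := nCongB_le_nCong hje
    rw [hjb] at hcong
    have := R.one_le_nLen p j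
    unfold pcSB
    omega
  obtain ⟨b, E, hb, hE, hcard⟩ := exists_bucket_edges_of_le_pcSB hp hstar hm P _ hcost
  refine ⟨b, E, hb, hE, ?_⟩
  by_contra! hE1
  have : #P ≤ R.nC pstar * m * 1 := hcard.trans (Nat.mul_le_mul_left _ (Nat.le_of_lt_succ hE1))
  omega

theorem exists_bucket_edges_two_mul_card_le (hp : R.NashSB p) {pstar : R.Routing}
    (hstar : R.IsRouting pstar) {m : ℕ} (hm : ∀ j, Nat.log 2 (pstar j).length < m)
    {b s : ℕ} {E : Finset (Sym2 V)} (hb : 2 ^ (b + 1) ≤ R.nD pstar + 1)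
    (hE : ∀ e ∈ E, R.nC p ≤ R.nCongB p b e + 2 ^ (b + 1) + s)
    (hC : 2 * (R.nC pstar * m * R.nD pstar) + R.nD pstar + s + 1 ≤ R.nC p) :
    ∃ b' E', 2 ^ (b' + 1) ≤ R.nD pstar + 1 ∧
      (∀ e ∈ E', R.nC p ≤ R.nCongB p b' e + 2 ^ (b' + 1) + (s + 1)) ∧ 2 * #E ≤ #E' := by
  set X := R.nC pstar * m * R.nD pstar
  set P : Finset (Fin R.N) := {j | Nat.log 2 (p j).length = b ∧ ∃ e ∈ E, e ∈ (p j).edges}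
  have hcount : #E * (2 * X) ≤ #P * R.nD pstar := by
    refine card_mul_le_card_mul_of_le_nCongB (fun e he => ?_) (fun j hj => ?_)
    · have := hE e he
      omega
    · have := Nat.lt_pow_succ_log_self one_lt_two (p j).length
      rw [hj] at this
      omega
  have hcost : ∀ j ∈ P, R.nC p - (s + 1) ≤ R.pcSB p j := by
    intro j hj
    obtain ⟨hjb, e, he, hje⟩ := (mem_filter.mp hj).2
    have := nCongB_add_two_pow_le_pcSB_add_one hje
    rw [hjb] at this
    have := hE e he
    omega
  obtain ⟨b', E', hb', hE', hcard⟩ := exists_bucket_edges_of_le_pcSB hp hstar hm P _ hcost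
  refine ⟨b', E', hb', fun e he => by have := hE' e he; omega, ?_⟩
  have hX : 0 < X := Nat.mul_pos (Nat.mul_pos (one_le_nC hstar) ((Nat.zero_le _).trans_lt
    (hm ⟨0, R.Npos⟩))) (R.one_le_nD pstar)
  refine Nat.le_of_mul_le_mul_right (?_ : 2 * #E * X ≤ #E' * X) hX
  calc 2 * #E * X = #E * (2 * X) := by ring
    _ ≤ #P * R.nD pstar := hcount
    _ ≤ R.nC pstar * m * #E' * R.nD pstar := by gcongr
    _ = #E' * X := by ring

theorem exists_bucket_edges_two_pow_le_card (hp : R.NashSB p) {pstar : R.Routing}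
    (hstar : R.IsRouting pstar) {m : ℕ} (hm : ∀ j, Nat.log 2 (pstar j).length < m) {t : ℕ}
    (hC : 2 * (R.nC pstar * m * R.nD pstar) + R.nD pstar + t ≤ R.nC p) {s : ℕ} (hs : s ≤ t) :
    ∃ b E, 2 ^ (b + 1) ≤ R.nD pstar + 1 ∧
      (∀ e ∈ E, R.nC p ≤ R.nCongB p b e + 2 ^ (b + 1) + s) ∧ 2 ^ (s + 1) ≤ #E := by
  induction s with
  | zero =>
    have hD := R.one_le_nD pstar
    have : R.nC pstar * m ≤ R.nC pstar * m * R.nD pstar := Nat.le_mul_of_pos_right _ hD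
    simpa using exists_bucket_edges_two_le_card hp hstar hm (by omega)
  | succ s ih =>
    obtain ⟨b, E, hb, hE, hcard⟩ := ih (by omega)
    obtain ⟨b', E', hb', hE', hcard'⟩ :=
      exists_bucket_edges_two_mul_card_le hp hstar hm hb hE (by omega)
    exact ⟨b', E', hb', hE', by rw [pow_succ]; omega⟩

end

theorem sum_bucket_congestion_upper_bound_general (R : RoutingGame V)
    (p pstar : R.Routing) (hp : R.NashSB p) (hstar : R.IsRouting pstar) :
    R.nC p ≤ 18 * R.nC pstar * R.nD pstar *
      (Nat.clog 2 (Fintype.card V)) ^ 2 := by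
  set lg := Nat.clog 2 (Fintype.card V)
  have hlg : 1 ≤ lg := Nat.clog_pos one_lt_two R.two_le_card
  have hA := one_le_nC hstar
  have hD := R.one_le_nD pstar
  by_contra! hC
  obtain ⟨-, E, -, -, hcard⟩ := exists_bucket_edges_two_pow_le_card hp hstar
    (fun j => R.log_length_lt_of_mem_strat (hstar j)) (t := 2 * lg)
    (by nlinarith [Nat.mul_le_mul hA hD, Nat.mul_le_mul (Nat.mul_le_mul hA hD) hlg,
      Nat.mul_le_mul (Nat.mul_le_mul (le_refl (R.nC pstar * R.nD pstar)) hlg) hlg]) le_rfl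
  have hE : #E ≤ 2 ^ (2 * lg) := (card_le_univ E).trans (Sym2.card_le_two_pow_two_mul_clog V)
  exact absurd (hcard.trans hE) (Nat.pow_lt_pow_succ one_lt_two).not_ge

/-- Let `p` be a Nash-routing of a sum-bucket game on a graph
with `n ≥ 2` vertices, and let `p*` be any routing with `C̄* = C̄(p*)` and
`D̄* = D̄(p*)`.  Then `C̄(p) ≤ 18 · C̄* · D̄* · ⌈log₂ n⌉²`. -/
theorem sum_bucket_congestion_upper_bound (R : RoutingGame V)
    (p pstar : R.Routing) (hp : R.NashSB p) (hstar : R.IsRouting pstar)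
    (hn : 2 ≤ Fintype.card V) :
    R.nC p ≤ 18 * R.nC pstar * R.nD pstar *
      (Nat.clog 2 (Fintype.card V)) ^ 2 :=
  sum_bucket_congestion_upper_bound_general R p pstar hp hstar

end RoutingGame
end
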